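/- arXiv:1908.04137 — 4 statements merged into one kernel-verified Lean document; each statement's English description precedes it below -/
import Mathlib

section
/- If an arithmetic matroid M = (E, rk, m) satisfies the strong gcd property, then it also satisfies the gcd property. -/
open scoped Classical

section Arithmat

variable {E : Type*} [Fintype E] [DecidableEq E]

/-- The rank function axioms of a matroid on ground set `E`. -/
def IsRankFn (rk : Finset E → ℕ) : Prop :=
  (∀ X : Finset E, rk X ≤ X.card) ∧
  (∀ X Y : Finset E, rk (X ∪ Y) + rk (X ∩ Y) ≤ rk X + rk Y) ∧
  (∀ (X : Finset E) (e : E), rk X ≤ rk (insert e X) ∧ rk (insert e X) ≤ rk X + 1)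

/-- `B` is a basis of the matroid: `|B| = rk B = rk E`. -/
def IsBasis (rk : Finset E → ℕ) (B : Finset E) : Prop :=
  B.card = rk B ∧ rk B = rk (Finset.univ : Finset E)

/-- `(X, X ⊔ T ⊔ F)` is a molecule: `X`, `T`, `F` are pairwise disjoint and
`rk Z = rk X + |Z ∩ F|` for every `Z` with `X ⊆ Z ⊆ X ∪ T ∪ F`. -/
def IsMolecule (rk : Finset E → ℕ) (X T F : Finset E) : Prop :=
  Disjoint X T ∧ Disjoint X F ∧ Disjoint T F ∧
  ∀ Z : Finset E, X ⊆ Z → Z ⊆ X ∪ T ∪ F → rk Z = rk X + (Z ∩ F).card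

/-- Axiom (A1) of (quasi-)arithmetic matroids. -/
def AxiomA1 (rk m : Finset E → ℕ) : Prop :=
  ∀ (X : Finset E) (e : E),
    (rk (insert e X) = rk X → m (insert e X) ∣ m X) ∧
    (rk (insert e X) ≠ rk X → m X ∣ m (insert e X))

/-- Axiom (A2) of (quasi-)arithmetic matroids. -/
def AxiomA2 (rk m : Finset E → ℕ) : Prop :=
  ∀ X T F : Finset E, IsMolecule rk X T F →
    m X * m (X ∪ T ∪ F) = m (X ∪ T) * m (X ∪ F)

/-- Axiom (P) of arithmetic matroids.  The sign `(-1) ^ (|X ∪ F| - |S|)` is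
expressed as `(-1) ^ (|X ∪ F| + |S|)`, which has the same parity. -/
def AxiomP (rk m : Finset E → ℕ) : Prop :=
  ∀ X T F : Finset E, IsMolecule rk X T F →
    0 ≤ ∑ S ∈ Finset.Icc X (X ∪ T ∪ F), (-1 : ℤ) ^ ((X ∪ F).card + S.card) * (m S : ℤ)

/-- A quasi-arithmetic matroid: a matroid rank function together with a positive
multiplicity function satisfying (A1) and (A2). -/
def IsQuasiArithmeticMatroid (rk m : Finset E → ℕ) : Prop :=
  IsRankFn rk ∧ (∀ X : Finset E, 0 < m X) ∧ AxiomA1 rk m ∧ AxiomA2 rk m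

/-- An arithmetic matroid: a matroid rank function together with a positive
multiplicity function satisfying (A1), (A2) and (P). -/
def IsArithmeticMatroid (rk m : Finset E → ℕ) : Prop :=
  IsRankFn rk ∧ (∀ X : Finset E, 0 < m X) ∧ AxiomA1 rk m ∧ AxiomA2 rk m ∧ AxiomP rk m

/-- The gcd property: `m X = gcd { m I : I ⊆ X, |I| = rk I = rk X }`. -/
def GcdProperty (rk m : Finset E → ℕ) : Prop :=
  ∀ X : Finset E,
    m X = (X.powerset.filter (fun I => I.card = rk I ∧ rk I = rk X)).gcd m

/-- The strong gcd property: `m X = gcd { m B : B basis, |B ∩ X| = rk X }`. -/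
def StrongGcdProperty (rk m : Finset E → ℕ) : Prop :=
  ∀ X : Finset E,
    m X = ((Finset.univ : Finset (Finset E)).filter
      (fun B => IsBasis rk B ∧ (B ∩ X).card = rk X)).gcd m

/-- The rank function of the dual matroid: `rk* X = |X| - rk E + rk (E \ X)`. -/
def dualRk (rk : Finset E → ℕ) : Finset E → ℕ :=
  fun X => X.card + rk Xᶜ - rk (Finset.univ : Finset E)

/-- The multiplicity function of the dual arithmetic matroid: `m* X = m (E \ X)`. -/
def dualM (m : Finset E → ℕ) : Finset E → ℕ := fun X => m Xᶜ

/-- The set of bases of the matroid, as a `Finset`. -/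
noncomputable def basesFinset (rk : Finset E → ℕ) : Finset (Finset E) :=
  (Finset.univ : Finset (Finset E)).filter (IsBasis rk)

/-- The multiplicity function of the reduction:
`m̄ X = gcd { m B : B basis, rk X = |X ∩ B| } / gcd { m B : B basis }`. -/
noncomputable def reducedM (rk m : Finset E → ℕ) : Finset E → ℕ := fun X =>
  ((basesFinset rk).filter (fun B => (X ∩ B).card = rk X)).gcd m /
    (basesFinset rk).gcd m

/-- `B_(X,Y)`: the set of pairs `(B₁, B₂)` of bases with `rk X = |X ∩ B₁|` and
`rk Y = |Y ∩ B₂|`. -/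
def BasisPairs (rk : Finset E → ℕ) (X Y : Finset E) : Set (Finset E × Finset E) :=
  {p | IsBasis rk p.1 ∧ IsBasis rk p.2 ∧ rk X = (X ∩ p.1).card ∧ rk Y = (Y ∩ p.2).card}

lemma rk_le_union {E : Type*} [DecidableEq E] {rk : Finset E → ℕ}
    (h : IsRankFn rk) (A S : Finset E) : rk A ≤ rk (A ∪ S) := by
  classical
  induction S using Finset.induction_on with
  | empty => simp
  | @insert e S he ih =>
      have : A ∪ insert e S = insert e (A ∪ S) := by
        ext x; simp [Finset.mem_insert, or_left_comm, or_comm]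
      rw [this]
      exact le_trans ih (h.2.2 (A ∪ S) e).1

lemma rk_mono {E : Type*} [DecidableEq E] {rk : Finset E → ℕ}
    (h : IsRankFn rk) {A B : Finset E} (hAB : A ⊆ B) : rk A ≤ rk B := by
  have := rk_le_union h A (B \ A)
  rwa [Finset.union_sdiff_of_subset hAB] at this

lemma rk_union_le {E : Type*} [DecidableEq E] {rk : Finset E → ℕ}
    (h : IsRankFn rk) (A S : Finset E) : rk (A ∪ S) ≤ rk A + S.card := by
  classical
  induction S using Finset.induction_on with
  | empty => simp
  | @insert e S he ih =>
      have hu : A ∪ insert e S = insert e (A ∪ S) := by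
        ext x; simp [Finset.mem_insert, or_left_comm, or_comm]
      rw [hu, Finset.card_insert_of_notMem he]
      calc rk (insert e (A ∪ S)) ≤ rk (A ∪ S) + 1 := (h.2.2 (A ∪ S) e).2
        _ ≤ rk A + S.card + 1 := by omega

lemma indep_subset {E : Type*} [DecidableEq E] {rk : Finset E → ℕ}
    (h : IsRankFn rk) {A B : Finset E} (hAB : A ⊆ B) (hB : B.card = rk B) :
    A.card = rk A := by
  have h1 : rk A ≤ A.card := h.1 A
  have h2 : rk B ≤ rk A + (B \ A).card := by
    have := rk_union_le h A (B \ A)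
    rwa [Finset.union_sdiff_of_subset hAB] at this
  have h3 : (B \ A).card = B.card - A.card := Finset.card_sdiff_of_subset hAB
  have h4 : A.card ≤ B.card := Finset.card_le_card hAB
  omega

end Arithmat

/-- If an arithmetic matroid `M = (E, rk, m)` satisfies the strong
gcd property, then it also satisfies the gcd property. -/
theorem strongGcd_implies_gcd {E : Type*} [Fintype E] [DecidableEq E]
    (rk m : Finset E → ℕ) (hM : IsArithmeticMatroid rk m)
    (hstrong : StrongGcdProperty rk m) :
    GcdProperty rk m := by
  classical
  obtain ⟨hrk, -, -⟩ := hM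
  intro X
  set FB : Finset E → Finset (Finset E) := fun Y =>
    (Finset.univ : Finset (Finset E)).filter
      (fun B => IsBasis rk B ∧ (B ∩ Y).card = rk Y) with hFB
  -- key: bases in FB X restricted to X are independent
  have key : ∀ {B Y : Finset E}, IsBasis rk B → (B ∩ Y).card = rk (B ∩ Y) := by
    intro B Y hB
    exact indep_subset hrk Finset.inter_subset_left hB.1
  apply Nat.dvd_antisymm
  · -- m X ∣ gcd over independents
    apply Finset.dvd_gcd
    intro I hI
    simp only [Finset.mem_filter, Finset.mem_powerset] at hI
    obtain ⟨hIX, hIcard, hIrk⟩ := hI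
    rw [hstrong X, hstrong I]
    apply Finset.dvd_gcd
    intro B hB
    simp only [Finset.mem_filter] at hB
    obtain ⟨-, hBbasis, hBI⟩ := hB
    have hmem : B ∈ (Finset.univ : Finset (Finset E)).filter
        (fun B => IsBasis rk B ∧ (B ∩ X).card = rk X) := by
      simp only [Finset.mem_filter, Finset.mem_univ, true_and]
      refine ⟨hBbasis, le_antisymm ?_ ?_⟩
      · have h1 : (B ∩ X).card = rk (B ∩ X) := key hBbasis
        have h2 : rk (B ∩ X) ≤ rk X := rk_mono hrk Finset.inter_subset_right
        omega
      · have h3 : B ∩ I ⊆ B ∩ X := Finset.inter_subset_inter le_rfl hIX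
        have h4 : (B ∩ I).card ≤ (B ∩ X).card := Finset.card_le_card h3
        omega
    exact Finset.gcd_dvd hmem
  · -- gcd over independents ∣ m X
    rw [hstrong X]
    apply Finset.dvd_gcd
    intro B hB
    simp only [Finset.mem_filter, Finset.mem_univ, true_and] at hB
    obtain ⟨hBbasis, hBX⟩ := hB
    have hIcard : (B ∩ X).card = rk (B ∩ X) := key hBbasis
    have hImem : B ∩ X ∈ X.powerset.filter
        (fun I => I.card = rk I ∧ rk I = rk X) := by
      simp only [Finset.mem_filter, Finset.mem_powerset]
      exact ⟨Finset.inter_subset_right, hIcard, by omega⟩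
    refine dvd_trans (Finset.gcd_dvd hImem) ?_
    rw [hstrong (B ∩ X)]
    have hmem : B ∈ (Finset.univ : Finset (Finset E)).filter
        (fun B' => IsBasis rk B' ∧ (B' ∩ (B ∩ X)).card = rk (B ∩ X)) := by
      simp only [Finset.mem_filter, Finset.mem_univ, true_and]
      refine ⟨hBbasis, ?_⟩
      rw [← Finset.inter_assoc, Finset.inter_self]
      exact hIcard
    exact Finset.gcd_dvd hmem
end

section
/- If an arithmetic matroid M = (E, rk, m) satisfies the strong gcd property, then its dual M* = (E, rk*, m*) also satisfies the strong gcd property. -/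
open scoped Classical

section Arithmat

variable {E : Type*} [Fintype E] [DecidableEq E]

section Aux
variable {E : Type*} [Fintype E] [DecidableEq E]

lemma rk_empty {rk : Finset E → ℕ} (h : IsRankFn rk) : rk ∅ = 0 :=
  Nat.le_zero.mp (by simpa using h.1 ∅)

lemma rk_mono_s1 {rk : Finset E → ℕ} (h : IsRankFn rk) {X Y : Finset E}
    (hXY : X ⊆ Y) : rk X ≤ rk Y := by
  have key : ∀ Z : Finset E, rk X ≤ rk (X ∪ Z) := by
    intro Z
    induction Z using Finset.induction with
    | empty => simp
    | @insert a Z ha ih =>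
      calc rk X ≤ rk (X ∪ Z) := ih
        _ ≤ rk (insert a (X ∪ Z)) := (h.2.2 _ a).1
        _ = rk (X ∪ insert a Z) := by rw [Finset.union_insert]
  have := key Y
  rwa [Finset.union_eq_right.mpr hXY] at this

lemma rk_le_top {rk : Finset E → ℕ} (h : IsRankFn rk) (X : Finset E) :
    rk X ≤ rk (Finset.univ : Finset E) := rk_mono_s1 h (Finset.subset_univ X)

lemma rk_top_le {rk : Finset E → ℕ} (h : IsRankFn rk) (X : Finset E) :
    rk (Finset.univ : Finset E) ≤ rk X + rk Xᶜ := by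
  have := h.2.1 X Xᶜ
  rw [Finset.union_compl, Finset.inter_compl, rk_empty h] at this
  omega

lemma dual_basis_iff {rk : Finset E → ℕ} (h : IsRankFn rk) (B : Finset E) :
    IsBasis (dualRk rk) B ↔ IsBasis rk Bᶜ := by
  have hc : Bᶜ.card = Fintype.card E - B.card := Finset.card_compl B
  have hle : B.card ≤ Fintype.card E := Finset.card_le_univ B
  have h1 := rk_le_top h Bᶜ
  have h2 := rk_top_le h B
  have h3 := h.1 B
  have h4 := h.1 Bᶜ
  have hcu : (Finset.univ : Finset E).card = Fintype.card E := Finset.card_univ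
  simp only [IsBasis, dualRk, Finset.compl_univ, rk_empty h, hcu]
  constructor
  · rintro ⟨hb1, hb2⟩
    constructor <;> omega
  · rintro ⟨hb1, hb2⟩
    constructor <;> omega

end Aux


end Arithmat

/-- If an arithmetic matroid `M = (E, rk, m)` satisfies the strong
gcd property, then its dual `M* = (E, rk*, m*)` also satisfies the strong gcd
property. -/
theorem strongGcd_dual {E : Type*} [Fintype E] [DecidableEq E]
    (rk m : Finset E → ℕ) (hM : IsArithmeticMatroid rk m)
    (hstrong : StrongGcdProperty rk m) :
    StrongGcdProperty (dualRk rk) (dualM m) := by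
  obtain ⟨hrk, hpos, _⟩ := hM
  intro X
  have key : ((Finset.univ : Finset (Finset E)).filter
      (fun B => IsBasis (dualRk rk) B ∧ (B ∩ X).card = dualRk rk X))
      = ((Finset.univ : Finset (Finset E)).filter
        (fun B => IsBasis rk B ∧ (B ∩ Xᶜ).card = rk Xᶜ)).image compl := by
    ext B
    simp only [Finset.mem_image, Finset.mem_filter, Finset.mem_univ, true_and]
    constructor
    · rintro ⟨hb, hcard⟩
      refine ⟨Bᶜ, ⟨(dual_basis_iff hrk B).mp hb, ?_⟩, compl_compl B⟩
      have hb' := (dual_basis_iff hrk B).mp hb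
      have e1 : B ∩ X = X \ Bᶜ := by
        ext a; simp [Finset.mem_sdiff, and_comm]
      have e2 : (X \ Bᶜ).card + (X ∩ Bᶜ).card = X.card :=
        Finset.card_sdiff_add_card_inter X Bᶜ
      have e3 : (Bᶜ \ X).card + (Bᶜ ∩ X).card = Bᶜ.card :=
        Finset.card_sdiff_add_card_inter Bᶜ X
      have e4 : Bᶜ ∩ Xᶜ = Bᶜ \ X := by ext a; simp [Finset.mem_sdiff]
      have e5 : (Bᶜ ∩ X).card = (X ∩ Bᶜ).card := by rw [Finset.inter_comm]
      unfold dualRk at hcard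
      have h1 := rk_le_top hrk Xᶜ
      have h2 := rk_top_le hrk X
      have h3 := hrk.1 X
      have hb1 := hb'.1; have hb2 := hb'.2
      rw [e1] at hcard
      rw [e4]
      omega
    · rintro ⟨B', ⟨hb', hcard⟩, rfl⟩
      refine ⟨(dual_basis_iff hrk B'ᶜ).mpr (by rwa [compl_compl]), ?_⟩
      have e1 : B'ᶜ ∩ X = X \ B' := by
        ext a; simp [Finset.mem_sdiff, and_comm]
      have e2 : (X \ B').card + (X ∩ B').card = X.card :=
        Finset.card_sdiff_add_card_inter X B'
      have e3 : (B' \ X).card + (B' ∩ X).card = B'.card :=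
        Finset.card_sdiff_add_card_inter B' X
      have e4 : B' ∩ Xᶜ = B' \ X := by ext a; simp [Finset.mem_sdiff]
      have e5 : (B' ∩ X).card = (X ∩ B').card := by rw [Finset.inter_comm]
      unfold dualRk
      have h1 := rk_le_top hrk Xᶜ
      have h2 := rk_top_le hrk X
      have h3 := hrk.1 X
      have hb1 := hb'.1; have hb2 := hb'.2
      rw [e4] at hcard
      rw [e1]
      omega
  rw [key, Finset.gcd_image]
  have : (dualM m ∘ compl : Finset E → ℕ) = m := by
    funext S; simp [dualM]
  rw [this]
  exact hstrong Xᶜ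
end

section
/- Let M = (E, rk, m) be a quasi-arithmetic matroid and let m̄ be the multiplicity function of its reduction. Then m̄ satisfies axiom (A2): for every molecule (X,Y) with decomposition Y = X ⊔ T ⊔ F, m̄(X)·m̄(Y) = m̄(X∪T)·m̄(X∪F). -/
open scoped Classical

namespace ReducedA2Aux

set_option linter.unusedSectionVars false

open Finset

variable {E : Type*} [Fintype E] [DecidableEq E]

section Rank

variable {rk : Finset E → ℕ}

lemma rk_le_union (hrk : IsRankFn rk) (A S : Finset E) : rk A ≤ rk (A ∪ S) := by
  induction S using Finset.induction_on with
  | empty => simp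
  | @insert e S _ ih =>
    rw [Finset.union_insert]
    exact le_trans ih (hrk.2.2 (A ∪ S) e).1

lemma rk_mono (hrk : IsRankFn rk) {A B : Finset E} (h : A ⊆ B) : rk A ≤ rk B := by
  have h2 := rk_le_union hrk A (B \ A)
  rwa [Finset.union_sdiff_of_subset h] at h2

lemma rk_union_le (hrk : IsRankFn rk) (A S : Finset E) : rk (A ∪ S) ≤ rk A + S.card := by
  induction S using Finset.induction_on with
  | @insert e S he ih =>
    rw [Finset.union_insert]
    have h1 := (hrk.2.2 (A ∪ S) e).2
    have h2 : (insert e S).card = S.card + 1 := Finset.card_insert_of_notMem he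
    omega
  | empty => simp

lemma rk_indep_subset (hrk : IsRankFn rk) {A C : Finset E} (h : A ⊆ C) (hC : rk C = C.card) :
    rk A = A.card := by
  have h1 : rk C ≤ rk A + (C \ A).card := by
    have h2 := rk_union_le hrk A (C \ A)
    rwa [Finset.union_sdiff_of_subset h] at h2
  have h2 : rk A ≤ A.card := hrk.1 A
  have h3 : (C \ A).card + A.card = C.card := Finset.card_sdiff_add_card_eq_card h
  omega

lemma rk_union_congr (hrk : IsRankFn rk) {A B : Finset E} (hAB : A ⊆ B) (hr : rk A = rk B)
    (C : Finset E) : rk (A ∪ C) = rk (B ∪ C) := by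
  have h1 : rk (A ∪ C) ≤ rk (B ∪ C) :=
    rk_mono hrk (Finset.union_subset_union hAB (subset_refl C))
  have h2 := hrk.2.1 (A ∪ C) B
  have e1 : (A ∪ C) ∪ B = B ∪ C := by
    rw [Finset.union_right_comm, Finset.union_eq_right.mpr hAB]
  have e2 : rk A ≤ rk ((A ∪ C) ∩ B) :=
    rk_mono hrk (Finset.subset_inter Finset.subset_union_left hAB)
  rw [e1] at h2
  omega

lemma exists_rk_insert_succ (hrk : IsRankFn rk) {A V : Finset E} (hAV : A ⊆ V)
    (hlt : rk A < rk V) : ∃ e ∈ V, rk (insert e A) = rk A + 1 := by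
  by_contra hc
  push_neg at hc
  have hstep : ∀ e ∈ V, rk (insert e A) = rk A := by
    intro e he
    have h1 := (hrk.2.2 A e).1
    have h2 := (hrk.2.2 A e).2
    have h3 := hc e he
    omega
  have key : ∀ S : Finset E, S ⊆ V → rk (A ∪ S) = rk A := by
    intro S
    induction S using Finset.induction_on with
    | empty => simp
    | @insert e S _ ih =>
      intro hsub
      have heV : e ∈ V := hsub (Finset.mem_insert_self e S)
      have hSV : S ⊆ V := fun x hx => hsub (Finset.mem_insert_of_mem hx)
      have hS := ih hSV
      have hsub2 := hrk.2.1 (A ∪ S) (insert e A)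
      have e1 : (A ∪ S) ∪ insert e A = insert e (A ∪ S) := by
        ext x
        simp only [Finset.mem_union, Finset.mem_insert]
        tauto
      have e2 : rk A ≤ rk ((A ∪ S) ∩ insert e A) :=
        rk_mono hrk (Finset.subset_inter Finset.subset_union_left (Finset.subset_insert e A))
      have e3 : rk (A ∪ S) ≤ rk (insert e (A ∪ S)) := (hrk.2.2 (A ∪ S) e).1
      have e4 : A ∪ insert e S = insert e (A ∪ S) := Finset.union_insert e A S
      have e5 := hstep e heV
      rw [e1] at hsub2
      rw [e4]
      omega
  have h6 := key V (subset_refl V)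
  rw [Finset.union_eq_right.mpr hAV] at h6
  omega

lemma exists_basis_between (hrk : IsRankFn rk) :
    ∀ (k : ℕ) (A V : Finset E), A ⊆ V → rk A = A.card → rk V ≤ A.card + k →
      ∃ B : Finset E, A ⊆ B ∧ B ⊆ V ∧ rk B = B.card ∧ rk B = rk V := by
  intro k
  induction k with
  | zero =>
    intro A V hAV hA hle
    have h1 : rk A ≤ rk V := rk_mono hrk hAV
    exact ⟨A, subset_refl A, hAV, hA, by omega⟩
  | succ k ih =>
    intro A V hAV hA hle
    by_cases hEq : rk V ≤ rk A
    · have h1 : rk A ≤ rk V := rk_mono hrk hAV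
      exact ⟨A, subset_refl A, hAV, hA, by omega⟩
    · obtain ⟨e, heV, hins⟩ := exists_rk_insert_succ hrk hAV (by omega)
      have heA : e ∉ A := by
        intro hmem
        rw [Finset.insert_eq_self.mpr hmem] at hins
        omega
      have hcard : (insert e A).card = A.card + 1 := Finset.card_insert_of_notMem heA
      obtain ⟨B, hB1, hB2, hB3, hB4⟩ :=
        ih (insert e A) V (Finset.insert_subset heV hAV) (by omega) (by omega)
      exact ⟨B, (Finset.subset_insert e A).trans hB1, hB2, hB3, hB4⟩

end Rank

noncomputable def basesOf (rk : Finset E → ℕ) (Z : Finset E) : Finset (Finset E) :=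
  Z.powerset.filter fun I => I.card = rk Z ∧ rk I = rk Z

lemma mem_basesOf {rk : Finset E → ℕ} {Z I : Finset E} :
    I ∈ basesOf rk Z ↔ I ⊆ Z ∧ I.card = rk Z ∧ rk I = rk Z := by
  simp [basesOf, and_assoc]

lemma basesOf_nonempty {rk : Finset E → ℕ} (hrk : IsRankFn rk) (Z : Finset E) :
    (basesOf rk Z).Nonempty := by
  have h0 : rk (∅ : Finset E) = (∅ : Finset E).card := by
    have h1 := hrk.1 (∅ : Finset E)
    simp only [Finset.card_empty] at h1 ⊢
    omega
  obtain ⟨B, _, hBZ, hB1, hB2⟩ :=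
    exists_basis_between hrk (rk Z) ∅ Z (Finset.empty_subset Z) h0 (by simp)
  exact ⟨B, mem_basesOf.mpr ⟨hBZ, by omega, by omega⟩⟩

noncomputable def cobasesOver (rk : Finset E → ℕ) (Z : Finset E) : Finset (Finset E) :=
  Finset.univ.filter fun J => Disjoint J Z ∧
    J.card + rk Z = rk (Finset.univ : Finset E) ∧
    rk (Z ∪ J) = rk (Finset.univ : Finset E)

lemma mem_cobasesOver {rk : Finset E → ℕ} {Z J : Finset E} :
    J ∈ cobasesOver rk Z ↔ Disjoint J Z ∧
      J.card + rk Z = rk (Finset.univ : Finset E) ∧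
      rk (Z ∪ J) = rk (Finset.univ : Finset E) := by
  simp [cobasesOver]

noncomputable def adaptedOf (rk : Finset E → ℕ) (Z : Finset E) : Finset (Finset E) :=
  (basesFinset rk).filter fun B => (Z ∩ B).card = rk Z

lemma mem_adaptedOf {rk : Finset E → ℕ} {Z B : Finset E} :
    B ∈ adaptedOf rk Z ↔ IsBasis rk B ∧ (Z ∩ B).card = rk Z := by
  simp [adaptedOf, basesFinset, Finset.mem_filter]

lemma gcd_eq_gcd_of {α β : Type*} {S : Finset α} {Tt : Finset β} {f : α → ℕ} {g : β → ℕ}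
    (h1 : ∀ a ∈ S, ∃ b ∈ Tt, g b = f a) (h2 : ∀ b ∈ Tt, ∃ a ∈ S, f a = g b) :
    S.gcd f = Tt.gcd g :=
  Nat.dvd_antisymm
    (Finset.dvd_gcd fun b hb => by
      obtain ⟨a, ha, he⟩ := h2 b hb; exact he ▸ Finset.gcd_dvd ha)
    (Finset.dvd_gcd fun a ha => by
      obtain ⟨b, hb, he⟩ := h1 a ha; exact he ▸ Finset.gcd_dvd hb)

lemma gcd_mul_right_nat {α : Type*} (S : Finset α) (f : α → ℕ) (c : ℕ) :
    S.gcd f * c = S.gcd fun x => f x * c := by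
  rw [Finset.gcd_mul_right, normalize_eq]

lemma gcd_mul_left_nat {α : Type*} (S : Finset α) (f : α → ℕ) (c : ℕ) :
    c * S.gcd f = S.gcd fun x => c * f x := by
  rw [Finset.gcd_mul_left, normalize_eq]

end ReducedA2Aux


namespace ReducedA2Aux

set_option linter.unusedSectionVars false
set_option maxHeartbeats 1000000

open Finset

variable {E : Type*} [Fintype E] [DecidableEq E]

section Molecule

variable {rk m : Finset E → ℕ} {X T F : Finset E}

lemma mol_rk_XT (Hmol : IsMolecule rk X T F) {T' : Finset E} (hT' : T' ⊆ T) :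
    rk (X ∪ T') = rk X := by
  have hsub : X ∪ T' ⊆ X ∪ T ∪ F := by
    intro x hx
    rcases Finset.mem_union.mp hx with hx | hx
    · exact Finset.mem_union_left _ (Finset.mem_union_left _ hx)
    · exact Finset.mem_union_left _ (Finset.mem_union_right _ (hT' hx))
  have hint : (X ∪ T') ∩ F = ∅ := by
    rw [← Finset.disjoint_iff_inter_eq_empty]
    exact Finset.disjoint_union_left.mpr
      ⟨Hmol.2.1, Finset.disjoint_of_subset_left hT' Hmol.2.2.1⟩
  have h := Hmol.2.2.2 (X ∪ T') Finset.subset_union_left hsub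
  rw [hint] at h
  simpa using h

lemma mol_rk_XTF (Hmol : IsMolecule rk X T F) {T' F' : Finset E} (hT' : T' ⊆ T)
    (hF' : F' ⊆ F) : rk (X ∪ T' ∪ F') = rk X + F'.card := by
  have hsub1 : X ⊆ X ∪ T' ∪ F' := Finset.subset_union_left.trans Finset.subset_union_left
  have hsub2 : X ∪ T' ∪ F' ⊆ X ∪ T ∪ F :=
    Finset.union_subset_union (Finset.union_subset_union (subset_refl X) hT') hF'
  have hint : (X ∪ T' ∪ F') ∩ F = F' := by
    ext x
    simp only [Finset.mem_inter, Finset.mem_union]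
    constructor
    · rintro ⟨(hx | hx) | hx, hf⟩
      · exact absurd hf (Finset.disjoint_left.mp Hmol.2.1 hx)
      · exact absurd hf (Finset.disjoint_left.mp Hmol.2.2.1 (hT' hx))
      · exact hx
    · intro hx
      exact ⟨Or.inr hx, hF' hx⟩
  have h := Hmol.2.2.2 (X ∪ T' ∪ F') hsub1 hsub2
  rw [hint] at h
  exact h

lemma mol_rk_XTfull (Hmol : IsMolecule rk X T F) : rk (X ∪ T) = rk X :=
  mol_rk_XT Hmol (subset_refl T)

lemma mol_rk_XF (Hmol : IsMolecule rk X T F) : rk (X ∪ F) = rk X + F.card := by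
  have h := mol_rk_XTF Hmol (Finset.empty_subset T) (subset_refl F)
  simpa using h

lemma mol_rk_Y (Hmol : IsMolecule rk X T F) : rk (X ∪ T ∪ F) = rk X + F.card :=
  mol_rk_XTF Hmol (subset_refl T) (subset_refl F)

/-- (M1): for a basis `B` adapted to `Z`, the pair `(Z ∩ B, Z ∪ B)` is a molecule,
giving `m (Z∩B) * m (Z∪B) = m Z * m B`. -/
lemma basis_mol (hrk : IsRankFn rk) (hA2 : AxiomA2 rk m) {Z B : Finset E}
    (hB : IsBasis rk B) (hZB : (Z ∩ B).card = rk Z) :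
    m (Z ∩ B) * m (Z ∪ B) = m Z * m B := by
  have hBind : rk B = B.card := hB.1.symm
  have hmol : IsMolecule rk (Z ∩ B) (Z \ B) (B \ Z) := by
    refine ⟨?_, ?_, ?_, ?_⟩
    · exact Finset.disjoint_left.mpr fun x hx hx' =>
        (Finset.mem_sdiff.mp hx').2 (Finset.mem_inter.mp hx).2
    · exact Finset.disjoint_left.mpr fun x hx hx' =>
        (Finset.mem_sdiff.mp hx').2 (Finset.mem_inter.mp hx).1
    · exact Finset.disjoint_left.mpr fun x hx hx' =>
        (Finset.mem_sdiff.mp hx').2 (Finset.mem_sdiff.mp hx).1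
    · intro W hW1 hW2
      have hWZB : W ⊆ Z ∪ B := by
        intro x hx
        have h := hW2 hx
        simp only [Finset.mem_union, Finset.mem_inter, Finset.mem_sdiff] at h ⊢
        tauto
      have hWB : W ∩ B = (Z ∩ B) ∪ (W ∩ (B \ Z)) := by
        ext x
        simp only [Finset.mem_inter, Finset.mem_union, Finset.mem_sdiff]
        constructor
        · rintro ⟨hw, hb⟩
          by_cases hz : x ∈ Z
          · exact Or.inl ⟨hz, hb⟩
          · exact Or.inr ⟨hw, hb, hz⟩
        · rintro (⟨hz, hb⟩ | ⟨hw, hb, _⟩)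
          · exact ⟨hW1 (Finset.mem_inter.mpr ⟨hz, hb⟩), hb⟩
          · exact ⟨hw, hb⟩
      have hdisj : Disjoint (Z ∩ B) (W ∩ (B \ Z)) :=
        Finset.disjoint_left.mpr fun x hx hx' =>
          (Finset.mem_sdiff.mp (Finset.mem_inter.mp hx').2).2 (Finset.mem_inter.mp hx).1
      have hcard : (W ∩ B).card = (Z ∩ B).card + (W ∩ (B \ Z)).card := by
        rw [hWB, Finset.card_union_of_disjoint hdisj]
      have hWBind : rk (W ∩ B) = (W ∩ B).card :=
        rk_indep_subset hrk Finset.inter_subset_right hBind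
      have hlow : rk (W ∩ B) ≤ rk W := rk_mono hrk Finset.inter_subset_left
      have hWsub : W ⊆ Z ∪ (W ∩ (B \ Z)) := by
        intro x hx
        have h := hWZB hx
        simp only [Finset.mem_union, Finset.mem_inter, Finset.mem_sdiff] at h ⊢
        tauto
      have hup : rk W ≤ rk Z + (W ∩ (B \ Z)).card :=
        le_trans (rk_mono hrk hWsub) (rk_union_le hrk Z _)
      have hZBind : rk (Z ∩ B) = (Z ∩ B).card :=
        rk_indep_subset hrk Finset.inter_subset_right hBind
      omega
  have h := hA2 _ _ _ hmol
  have e1 : Z ∩ B ∪ Z \ B = Z := by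
    ext x
    simp only [Finset.mem_union, Finset.mem_inter, Finset.mem_sdiff]
    tauto
  have e2 : Z ∩ B ∪ B \ Z = B := by
    ext x
    simp only [Finset.mem_union, Finset.mem_inter, Finset.mem_sdiff]
    tauto
  rw [e1, e2, Finset.union_sdiff_self_eq_union] at h
  exact h

lemma mol_W_eq {W : Finset E} (hXW : X ⊆ W) (hWT : W ⊆ X ∪ T) : W = X ∪ W ∩ T := by
  ext x
  simp only [Finset.mem_union, Finset.mem_inter]
  constructor
  · intro hx
    rcases Finset.mem_union.mp (hWT hx) with h | h
    · exact Or.inl h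
    · exact Or.inr ⟨hx, h⟩
  · rintro (hx | ⟨hx, _⟩)
    · exact hXW hx
    · exact hx

lemma basesOf_mono_XT (Hmol : IsMolecule rk X T F) {W : Finset E} (hXW : X ⊆ W)
    (hWT : W ⊆ X ∪ T) {I : Finset E} (hI : I ∈ basesOf rk W) :
    I ∈ basesOf rk (X ∪ T) := by
  obtain ⟨hs, hc, hr⟩ := mem_basesOf.mp hI
  have hrkW : rk W = rk X := by
    conv_lhs => rw [mol_W_eq hXW hWT]
    exact mol_rk_XT Hmol Finset.inter_subset_right
  have hXTeq : rk (X ∪ T) = rk X := mol_rk_XTfull Hmol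
  exact mem_basesOf.mpr ⟨hs.trans hWT, by omega, by omega⟩

/-- (M2): `I` a basis of `X ∪ T`, `I ⊆ W ⊆ X ∪ T`; then `(I, W \ I, F)` is a molecule. -/
lemma indep_mol (hrk : IsRankFn rk) (hA2 : AxiomA2 rk m) (Hmol : IsMolecule rk X T F)
    {I W : Finset E} (hI : I ∈ basesOf rk (X ∪ T)) (hIW : I ⊆ W) (hW : W ⊆ X ∪ T) :
    m I * m (W ∪ F) = m W * m (I ∪ F) := by
  obtain ⟨hIsub, hIcard, hIrk⟩ := mem_basesOf.mp hI
  have hXTF : Disjoint (X ∪ T) F := Finset.disjoint_union_left.mpr ⟨Hmol.2.1, Hmol.2.2.1⟩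
  have hIW2 : I ∪ W \ I = W := Finset.union_sdiff_of_subset hIW
  have hmol : IsMolecule rk I (W \ I) F := by
    refine ⟨?_, ?_, ?_, ?_⟩
    · exact Finset.disjoint_left.mpr fun x hx hx' => (Finset.mem_sdiff.mp hx').2 hx
    · exact Finset.disjoint_of_subset_left hIsub hXTF
    · exact Finset.disjoint_of_subset_left (Finset.sdiff_subset.trans hW) hXTF
    · intro V hV1 hV2
      rw [hIW2] at hV2
      have hlow : I ∪ V ∩ F ⊆ V := Finset.union_subset hV1 Finset.inter_subset_left
      have hup : V ⊆ (X ∪ T) ∪ V ∩ F := by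
        intro x hx
        rcases Finset.mem_union.mp (hV2 hx) with h | h
        · exact Finset.mem_union_left _ (hW h)
        · exact Finset.mem_union_right _ (Finset.mem_inter.mpr ⟨hx, h⟩)
      have e1 : rk (I ∪ V ∩ F) = rk ((X ∪ T) ∪ V ∩ F) := rk_union_congr hrk hIsub hIrk _
      have e2 : rk (X ∪ T ∪ V ∩ F) = rk X + (V ∩ F).card :=
        mol_rk_XTF Hmol (subset_refl T) Finset.inter_subset_right
      have e3 : rk (I ∪ V ∩ F) ≤ rk V := rk_mono hrk hlow
      have e4 : rk V ≤ rk ((X ∪ T) ∪ V ∩ F) := rk_mono hrk hup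
      have e5 : rk (X ∪ T) = rk X := mol_rk_XTfull Hmol
      omega
  have h := hA2 I (W \ I) F hmol
  rw [hIW2] at h
  exact h

lemma cross_indep (hrk : IsRankFn rk) (hm0 : ∀ Z : Finset E, 0 < m Z)
    (hA2 : AxiomA2 rk m) (Hmol : IsMolecule rk X T F)
    {I I' : Finset E} (hI : I ∈ basesOf rk (X ∪ T)) (hI' : I' ∈ basesOf rk (X ∪ T)) :
    m I * m (I' ∪ F) = m I' * m (I ∪ F) := by
  have hWsub : I ∪ I' ⊆ X ∪ T :=
    Finset.union_subset (mem_basesOf.mp hI).1 (mem_basesOf.mp hI').1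
  have h1 := indep_mol hrk hA2 Hmol hI Finset.subset_union_left hWsub
  have h2 := indep_mol hrk hA2 Hmol hI' Finset.subset_union_right hWsub
  have key : m (I ∪ I') * (m I * m (I' ∪ F)) = m (I ∪ I') * (m I' * m (I ∪ F)) := by
    calc m (I ∪ I') * (m I * m (I' ∪ F)) = m I * (m (I ∪ I') * m (I' ∪ F)) := by ring
    _ = m I * (m I' * m ((I ∪ I') ∪ F)) := by rw [← h2]
    _ = m I' * (m I * m ((I ∪ I') ∪ F)) := by ring
    _ = m I' * (m (I ∪ I') * m (I ∪ F)) := by rw [h1]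
    _ = m (I ∪ I') * (m I' * m (I ∪ F)) := by ring
  exact Nat.eq_of_mul_eq_mul_left (hm0 (I ∪ I')) key

lemma cobase_disjoint_T (hrk : IsRankFn rk) (Hmol : IsMolecule rk X T F) {J : Finset E}
    (hJ : J ∈ cobasesOver rk X) : Disjoint J T := by
  obtain ⟨hd, hcard, hsp⟩ := mem_cobasesOver.mp hJ
  have e0 : X ∪ J = (X ∪ J ∩ T) ∪ (J \ T) := by
    ext x
    simp only [Finset.mem_union, Finset.mem_inter, Finset.mem_sdiff]
    by_cases ht : x ∈ T <;> tauto
  have h1 : rk (X ∪ J) ≤ rk (X ∪ J ∩ T) + (J \ T).card := by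
    rw [e0]; exact rk_union_le hrk _ _
  have h2 : rk (X ∪ J ∩ T) = rk X := mol_rk_XT Hmol Finset.inter_subset_right
  have h3 : (J \ T).card + (J ∩ T).card = J.card := Finset.card_sdiff_add_card_inter J T
  have h4 : (J ∩ T).card = 0 := by omega
  exact Finset.disjoint_iff_inter_eq_empty.mpr (Finset.card_eq_zero.mp h4)

/-- (M3): for `J` a cobasis over `X`, `(X, T, J)` is a molecule. -/
lemma mol_cobase_X (hrk : IsRankFn rk) (hA2 : AxiomA2 rk m) (Hmol : IsMolecule rk X T F)
    {J : Finset E} (hJ : J ∈ cobasesOver rk X) :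
    m X * m (X ∪ T ∪ J) = m (X ∪ T) * m (X ∪ J) := by
  obtain ⟨hd, hcard, hsp⟩ := mem_cobasesOver.mp hJ
  have hdT : Disjoint J T := cobase_disjoint_T hrk Hmol hJ
  have hmol : IsMolecule rk X T J := by
    refine ⟨Hmol.1, hd.symm, hdT.symm, ?_⟩
    intro V hV1 hV2
    have hup : V ⊆ (X ∪ V ∩ T) ∪ V ∩ J := by
      intro x hx
      rcases Finset.mem_union.mp (hV2 hx) with h | h
      · rcases Finset.mem_union.mp h with h' | h'
        · exact Finset.mem_union_left _ (Finset.mem_union_left _ h')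
        · exact Finset.mem_union_left _
            (Finset.mem_union_right _ (Finset.mem_inter.mpr ⟨hx, h'⟩))
      · exact Finset.mem_union_right _ (Finset.mem_inter.mpr ⟨hx, h⟩)
    have h1 : rk V ≤ rk (X ∪ V ∩ T) + (V ∩ J).card :=
      le_trans (rk_mono hrk hup) (rk_union_le hrk _ _)
    have h2 : rk (X ∪ V ∩ T) = rk X := mol_rk_XT Hmol Finset.inter_subset_right
    have e0 : X ∪ J = (X ∪ V ∩ J) ∪ (J \ (V ∩ J)) := by
      ext x
      simp only [Finset.mem_union, Finset.mem_inter, Finset.mem_sdiff]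
      by_cases hv : x ∈ V <;> by_cases hj : x ∈ J <;> tauto
    have h3 : rk (X ∪ J) ≤ rk (X ∪ V ∩ J) + (J \ (V ∩ J)).card := by
      rw [e0]; exact rk_union_le hrk _ _
    have h4 : (J \ (V ∩ J)).card + (V ∩ J).card = J.card :=
      Finset.card_sdiff_add_card_eq_card Finset.inter_subset_right
    have h5 : rk (X ∪ V ∩ J) ≤ rk V :=
      rk_mono hrk (Finset.union_subset hV1 Finset.inter_subset_left)
    omega
  exact hA2 X T J hmol

lemma cobase_XF_disjoint_T (hrk : IsRankFn rk) (Hmol : IsMolecule rk X T F) {K : Finset E}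
    (hK : K ∈ cobasesOver rk (X ∪ F)) : Disjoint K T := by
  obtain ⟨hd, hcard, hsp⟩ := mem_cobasesOver.mp hK
  have e0 : (X ∪ F) ∪ K = ((X ∪ F) ∪ K ∩ T) ∪ (K \ T) := by
    ext x
    simp only [Finset.mem_union, Finset.mem_inter, Finset.mem_sdiff]
    by_cases ht : x ∈ T <;> tauto
  have h1 : rk ((X ∪ F) ∪ K) ≤ rk ((X ∪ F) ∪ K ∩ T) + (K \ T).card := by
    rw [e0]; exact rk_union_le hrk _ _
  have e1 : (X ∪ F) ∪ K ∩ T = X ∪ K ∩ T ∪ F := by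
    ext x
    simp only [Finset.mem_union, Finset.mem_inter]
    tauto
  have h2 : rk ((X ∪ F) ∪ K ∩ T) = rk X + F.card := by
    rw [e1]; exact mol_rk_XTF Hmol Finset.inter_subset_right (subset_refl F)
  have h2' : rk (X ∪ F) = rk X + F.card := mol_rk_XF Hmol
  have h3 : (K \ T).card + (K ∩ T).card = K.card := Finset.card_sdiff_add_card_inter K T
  have h4 : (K ∩ T).card = 0 := by omega
  exact Finset.disjoint_iff_inter_eq_empty.mpr (Finset.card_eq_zero.mp h4)

/-- (M4): for `K` a cobasis over `X ∪ F`, `(X ∪ F, T, K)` is a molecule. -/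
lemma mol_cobase_XF (hrk : IsRankFn rk) (hA2 : AxiomA2 rk m) (Hmol : IsMolecule rk X T F)
    {K : Finset E} (hK : K ∈ cobasesOver rk (X ∪ F)) :
    m (X ∪ F) * m ((X ∪ F) ∪ T ∪ K) = m ((X ∪ F) ∪ T) * m ((X ∪ F) ∪ K) := by
  obtain ⟨hd, hcard, hsp⟩ := mem_cobasesOver.mp hK
  have hdT : Disjoint K T := cobase_XF_disjoint_T hrk Hmol hK
  have hXF_T : Disjoint (X ∪ F) T :=
    Finset.disjoint_union_left.mpr ⟨Hmol.1, Hmol.2.2.1.symm⟩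
  have hrkXF : rk (X ∪ F) = rk X + F.card := mol_rk_XF Hmol
  have hrkXFT' : ∀ T' : Finset E, T' ⊆ T → rk ((X ∪ F) ∪ T') = rk X + F.card := by
    intro T' hT'
    have e1 : (X ∪ F) ∪ T' = X ∪ T' ∪ F := by
      ext x
      simp only [Finset.mem_union]
      tauto
    rw [e1]; exact mol_rk_XTF Hmol hT' (subset_refl F)
  have hmol : IsMolecule rk (X ∪ F) T K := by
    refine ⟨hXF_T, hd.symm, hdT.symm, ?_⟩
    intro V hV1 hV2
    have hup : V ⊆ ((X ∪ F) ∪ V ∩ T) ∪ V ∩ K := by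
      intro x hx
      rcases Finset.mem_union.mp (hV2 hx) with h | h
      · rcases Finset.mem_union.mp h with h' | h'
        · exact Finset.mem_union_left _ (Finset.mem_union_left _ h')
        · exact Finset.mem_union_left _
            (Finset.mem_union_right _ (Finset.mem_inter.mpr ⟨hx, h'⟩))
      · exact Finset.mem_union_right _ (Finset.mem_inter.mpr ⟨hx, h⟩)
    have h1 : rk V ≤ rk ((X ∪ F) ∪ V ∩ T) + (V ∩ K).card :=
      le_trans (rk_mono hrk hup) (rk_union_le hrk _ _)
    have h2 : rk ((X ∪ F) ∪ V ∩ T) = rk X + F.card := hrkXFT' _ Finset.inter_subset_right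
    have e0 : (X ∪ F) ∪ K = ((X ∪ F) ∪ V ∩ K) ∪ (K \ (V ∩ K)) := by
      ext x
      simp only [Finset.mem_union, Finset.mem_inter, Finset.mem_sdiff]
      by_cases hv : x ∈ V <;> by_cases hk : x ∈ K <;> tauto
    have h3 : rk ((X ∪ F) ∪ K) ≤ rk ((X ∪ F) ∪ V ∩ K) + (K \ (V ∩ K)).card := by
      rw [e0]; exact rk_union_le hrk _ _
    have h4 : (K \ (V ∩ K)).card + (V ∩ K).card = K.card :=
      Finset.card_sdiff_add_card_eq_card Finset.inter_subset_right
    have h5 : rk ((X ∪ F) ∪ V ∩ K) ≤ rk V :=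
      rk_mono hrk (Finset.union_subset hV1 Finset.inter_subset_left)
    omega
  exact hA2 (X ∪ F) T K hmol

end Molecule

end ReducedA2Aux


namespace ReducedA2Aux

set_option linter.unusedSectionVars false
set_option maxHeartbeats 1000000

open Finset

variable {E : Type*} [Fintype E] [DecidableEq E]

section MainPart

variable {rk m : Finset E → ℕ} {X T F : Finset E}

lemma adapted_inter_mem (hrk : IsRankFn rk) {Z B : Finset E} (hB : B ∈ adaptedOf rk Z) :
    Z ∩ B ∈ basesOf rk Z := by
  obtain ⟨hBas, hc⟩ := mem_adaptedOf.mp hB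
  refine mem_basesOf.mpr ⟨Finset.inter_subset_left, hc, ?_⟩
  have h1 : rk (Z ∩ B) = (Z ∩ B).card :=
    rk_indep_subset hrk Finset.inter_subset_right hBas.1.symm
  omega

lemma adapted_sdiff_mem (hrk : IsRankFn rk) {Z B : Finset E} (hB : B ∈ adaptedOf rk Z) :
    B \ Z ∈ cobasesOver rk Z := by
  obtain ⟨hBas, hc⟩ := mem_adaptedOf.mp hB
  have h3 := hBas.1
  have h4 := hBas.2
  refine mem_cobasesOver.mpr ⟨Finset.sdiff_disjoint, ?_, ?_⟩
  · have h1 : (B \ Z).card + (B ∩ Z).card = B.card := Finset.card_sdiff_add_card_inter B Z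
    have h2 : (B ∩ Z).card = (Z ∩ B).card := by rw [Finset.inter_comm]
    omega
  · rw [Finset.union_sdiff_self_eq_union]
    have h1 : rk B ≤ rk (Z ∪ B) := rk_mono hrk Finset.subset_union_right
    have h2 : rk (Z ∪ B) ≤ rk (Finset.univ : Finset E) := rk_mono hrk (Finset.subset_univ _)
    omega

lemma pair_inter {Z I J : Finset E} (hI : I ∈ basesOf rk Z) (hJ : J ∈ cobasesOver rk Z) :
    Z ∩ (I ∪ J) = I := by
  have hIZ := (mem_basesOf.mp hI).1
  have hJd := (mem_cobasesOver.mp hJ).1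
  ext x
  simp only [Finset.mem_inter, Finset.mem_union]
  constructor
  · rintro ⟨hz, hx | hx⟩
    · exact hx
    · exact absurd hz (Finset.disjoint_left.mp hJd hx)
  · intro hx
    exact ⟨hIZ hx, Or.inl hx⟩

lemma pair_union {Z I J : Finset E} (hI : I ∈ basesOf rk Z) :
    Z ∪ (I ∪ J) = Z ∪ J := by
  have hIZ := (mem_basesOf.mp hI).1
  ext x
  simp only [Finset.mem_union]
  constructor
  · rintro (hx | hx | hx)
    · exact Or.inl hx
    · exact Or.inl (hIZ hx)
    · exact Or.inr hx
  · rintro (hx | hx)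
    · exact Or.inl hx
    · exact Or.inr (Or.inr hx)

lemma pair_mem_adapted (hrk : IsRankFn rk) {Z I J : Finset E}
    (hI : I ∈ basesOf rk Z) (hJ : J ∈ cobasesOver rk Z) :
    I ∪ J ∈ adaptedOf rk Z := by
  obtain ⟨hIZ, hIc, hIr⟩ := mem_basesOf.mp hI
  obtain ⟨hJd, hJc, hJsp⟩ := mem_cobasesOver.mp hJ
  have hdisj : Disjoint I J := (hJd.mono_right hIZ).symm
  have hcard : (I ∪ J).card = I.card + J.card := Finset.card_union_of_disjoint hdisj
  have hrkIJ : rk (I ∪ J) = rk (Z ∪ J) := rk_union_congr hrk hIZ hIr J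
  refine mem_adaptedOf.mpr ⟨⟨by omega, by omega⟩, ?_⟩
  rw [pair_inter hI hJ]
  exact hIc

/-- `G(Z) * m(Z) = a(Z) * b(Z)`. -/
lemma G_mul_m (hrk : IsRankFn rk) (hA2 : AxiomA2 rk m) (Z : Finset E) :
    (adaptedOf rk Z).gcd m * m Z
      = (basesOf rk Z).gcd m * (cobasesOver rk Z).gcd (fun J => m (Z ∪ J)) := by
  rw [gcd_mul_right_nat]
  have hR : (basesOf rk Z).gcd m * (cobasesOver rk Z).gcd (fun J => m (Z ∪ J))
      = (basesOf rk Z).gcd fun I => (cobasesOver rk Z).gcd fun J => m I * m (Z ∪ J) := by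
    rw [gcd_mul_right_nat]
    refine Finset.gcd_congr rfl fun I hI => ?_
    rw [gcd_mul_left_nat]
  rw [hR]
  apply Nat.dvd_antisymm
  · refine Finset.dvd_gcd fun I hI => Finset.dvd_gcd fun J hJ => ?_
    have hmem := pair_mem_adapted hrk hI hJ
    have h1 : m (Z ∩ (I ∪ J)) * m (Z ∪ (I ∪ J)) = m Z * m (I ∪ J) :=
      basis_mol hrk hA2 (mem_adaptedOf.mp hmem).1 (mem_adaptedOf.mp hmem).2
    rw [pair_inter hI hJ, pair_union hI] at h1
    have h2 : ((adaptedOf rk Z).gcd fun B => m B * m Z) ∣ m (I ∪ J) * m Z :=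
      Finset.gcd_dvd hmem
    rw [h1, mul_comm]
    exact h2
  · refine Finset.dvd_gcd fun B hB => ?_
    have hI := adapted_inter_mem hrk hB
    have hJ := adapted_sdiff_mem hrk hB
    have h1 : m (Z ∩ B) * m (Z ∪ B) = m Z * m B :=
      basis_mol hrk hA2 (mem_adaptedOf.mp hB).1 (mem_adaptedOf.mp hB).2
    have h2 : ((basesOf rk Z).gcd fun I => (cobasesOver rk Z).gcd fun J => m I * m (Z ∪ J))
        ∣ m (Z ∩ B) * m (Z ∪ B \ Z) :=
      dvd_trans (Finset.gcd_dvd hI) (Finset.gcd_dvd hJ)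
    rw [Finset.union_sdiff_self_eq_union, h1, mul_comm] at h2
    exact h2

lemma a_mul_general (hrk : IsRankFn rk) (hm0 : ∀ Z : Finset E, 0 < m Z)
    (hA2 : AxiomA2 rk m) (Hmol : IsMolecule rk X T F) {W I₀ : Finset E}
    (hXW : X ⊆ W) (hWT : W ⊆ X ∪ T) (hI₀ : I₀ ∈ basesOf rk (X ∪ T)) :
    (basesOf rk (W ∪ F)).gcd m * m I₀ = (basesOf rk W).gcd m * m (I₀ ∪ F) := by
  have hrkW : rk W = rk X := by
    conv_lhs => rw [mol_W_eq hXW hWT]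
    exact mol_rk_XT Hmol Finset.inter_subset_right
  have hrkWF : rk (W ∪ F) = rk X + F.card := by
    conv_lhs => rw [mol_W_eq hXW hWT]
    exact mol_rk_XTF Hmol Finset.inter_subset_right (subset_refl F)
  have hWdisjF : Disjoint W F :=
    Finset.disjoint_of_subset_left hWT
      (Finset.disjoint_union_left.mpr ⟨Hmol.2.1, Hmol.2.2.1⟩)
  have hup : ∀ I ∈ basesOf rk W, I ∪ F ∈ basesOf rk (W ∪ F) := by
    intro I hI
    obtain ⟨hs, hc, hr⟩ := mem_basesOf.mp hI
    have hd : Disjoint I F := Finset.disjoint_of_subset_left hs hWdisjF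
    have h1 : (I ∪ F).card = I.card + F.card := Finset.card_union_of_disjoint hd
    have h2 : rk (I ∪ F) = rk (W ∪ F) := rk_union_congr hrk hs hr F
    exact mem_basesOf.mpr
      ⟨Finset.union_subset_union hs (subset_refl F), by omega, by omega⟩
  have hdown : ∀ I'' ∈ basesOf rk (W ∪ F),
      I'' ∩ W ∈ basesOf rk W ∧ I'' = (I'' ∩ W) ∪ F := by
    intro I'' hI''
    obtain ⟨hs, hc, hr⟩ := mem_basesOf.mp hI''
    have hind : rk I'' = I''.card := by omega
    have h1 : rk (I'' ∩ W) = (I'' ∩ W).card :=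
      rk_indep_subset hrk Finset.inter_subset_left hind
    have h2 : rk (I'' ∩ W) ≤ rk W := rk_mono hrk Finset.inter_subset_right
    have h3 : (I'' ∩ F).card ≤ F.card := Finset.card_le_card Finset.inter_subset_right
    have hsplit : I'' = (I'' ∩ W) ∪ (I'' ∩ F) := by
      rw [← Finset.inter_union_distrib_left]
      exact (Finset.inter_eq_left.mpr hs).symm
    have hdisj2 : Disjoint (I'' ∩ W) (I'' ∩ F) :=
      Finset.disjoint_of_subset_left Finset.inter_subset_right
        (Finset.disjoint_of_subset_right Finset.inter_subset_right hWdisjF)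
    have h4 : (I'' ∩ W).card + (I'' ∩ F).card = I''.card := by
      rw [← Finset.card_union_of_disjoint hdisj2, ← hsplit]
    have h5 : (I'' ∩ W).card = rk W := by omega
    have h7 : I'' ∩ F = F :=
      Finset.eq_of_subset_of_card_le Finset.inter_subset_right (by omega)
    refine ⟨mem_basesOf.mpr ⟨Finset.inter_subset_right, h5, by omega⟩, ?_⟩
    rw [← h7]
    exact hsplit
  rw [gcd_mul_right_nat, gcd_mul_right_nat]
  refine gcd_eq_gcd_of ?_ ?_
  · intro I'' hI''
    obtain ⟨hmem, heq⟩ := hdown I'' hI''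
    refine ⟨I'' ∩ W, hmem, ?_⟩
    have hcross := cross_indep hrk hm0 hA2 Hmol (basesOf_mono_XT Hmol hXW hWT hmem) hI₀
    rw [hcross, ← heq, mul_comm]
  · intro I hI
    refine ⟨I ∪ F, hup I hI, ?_⟩
    have hcross := cross_indep hrk hm0 hA2 Hmol (basesOf_mono_XT Hmol hXW hWT hI) hI₀
    rw [hcross, mul_comm]

lemma a_identity (hrk : IsRankFn rk) (hm0 : ∀ Z : Finset E, 0 < m Z)
    (hA2 : AxiomA2 rk m) (Hmol : IsMolecule rk X T F) :
    (basesOf rk X).gcd m * (basesOf rk (X ∪ T ∪ F)).gcd m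
      = (basesOf rk (X ∪ T)).gcd m * (basesOf rk (X ∪ F)).gcd m := by
  obtain ⟨I₀, hI₀⟩ := basesOf_nonempty hrk X
  have hI₀XT : I₀ ∈ basesOf rk (X ∪ T) :=
    basesOf_mono_XT Hmol (subset_refl X) Finset.subset_union_left hI₀
  have h1 := a_mul_general hrk hm0 hA2 Hmol (W := X ∪ T)
    Finset.subset_union_left (subset_refl _) hI₀XT
  have h2 := a_mul_general hrk hm0 hA2 Hmol (W := X)
    (subset_refl X) Finset.subset_union_left hI₀XT
  have key : ((basesOf rk X).gcd m * (basesOf rk (X ∪ T ∪ F)).gcd m) * m I₀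
      = ((basesOf rk (X ∪ T)).gcd m * (basesOf rk (X ∪ F)).gcd m) * m I₀ := by
    calc ((basesOf rk X).gcd m * (basesOf rk (X ∪ T ∪ F)).gcd m) * m I₀
        = (basesOf rk X).gcd m * ((basesOf rk (X ∪ T ∪ F)).gcd m * m I₀) := by ring
    _ = (basesOf rk X).gcd m * ((basesOf rk (X ∪ T)).gcd m * m (I₀ ∪ F)) := by rw [h1]
    _ = (basesOf rk (X ∪ T)).gcd m * ((basesOf rk X).gcd m * m (I₀ ∪ F)) := by ring
    _ = (basesOf rk (X ∪ T)).gcd m * ((basesOf rk (X ∪ F)).gcd m * m I₀) := by rw [← h2]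
    _ = ((basesOf rk (X ∪ T)).gcd m * (basesOf rk (X ∪ F)).gcd m) * m I₀ := by ring
  exact Nat.eq_of_mul_eq_mul_right (hm0 I₀) key

lemma cobases_XT_eq (hrk : IsRankFn rk) (Hmol : IsMolecule rk X T F) :
    cobasesOver rk (X ∪ T) = cobasesOver rk X := by
  ext J
  rw [mem_cobasesOver, mem_cobasesOver]
  have hXT : rk (X ∪ T) = rk X := mol_rk_XTfull Hmol
  have e1 : ∀ J : Finset E, rk (X ∪ J) = rk ((X ∪ T) ∪ J) := fun J =>
    rk_union_congr hrk Finset.subset_union_left hXT.symm J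
  constructor
  · rintro ⟨hd, hcard, hsp⟩
    exact ⟨hd.mono_right Finset.subset_union_left, by omega, by rw [e1]; exact hsp⟩
  · rintro ⟨hd, hcard, hsp⟩
    have hdT : Disjoint J T :=
      cobase_disjoint_T hrk Hmol (mem_cobasesOver.mpr ⟨hd, hcard, hsp⟩)
    exact ⟨Finset.disjoint_union_right.mpr ⟨hd, hdT⟩, by omega, by rw [← e1]; exact hsp⟩

lemma cobases_Y_eq (hrk : IsRankFn rk) (Hmol : IsMolecule rk X T F) :
    cobasesOver rk (X ∪ T ∪ F) = cobasesOver rk (X ∪ F) := by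
  ext K
  rw [mem_cobasesOver, mem_cobasesOver]
  have h1 : rk (X ∪ T ∪ F) = rk X + F.card := mol_rk_Y Hmol
  have h2 : rk (X ∪ F) = rk X + F.card := mol_rk_XF Hmol
  have hsubYF : X ∪ F ⊆ X ∪ T ∪ F := by
    intro x hx
    rcases Finset.mem_union.mp hx with h | h
    · exact Finset.mem_union_left _ (Finset.mem_union_left _ h)
    · exact Finset.mem_union_right _ h
  have e1 : ∀ K : Finset E, rk ((X ∪ F) ∪ K) = rk ((X ∪ T ∪ F) ∪ K) := fun K =>
    rk_union_congr hrk hsubYF (by omega) K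
  constructor
  · rintro ⟨hd, hcard, hsp⟩
    exact ⟨hd.mono_right hsubYF, by omega, by rw [e1]; exact hsp⟩
  · rintro ⟨hd, hcard, hsp⟩
    have hdT : Disjoint K T :=
      cobase_XF_disjoint_T hrk Hmol (mem_cobasesOver.mpr ⟨hd, hcard, hsp⟩)
    have hdY : Disjoint K (X ∪ T ∪ F) := by
      rcases Finset.disjoint_union_right.mp hd with ⟨hdX, hdF⟩
      exact Finset.disjoint_union_right.mpr
        ⟨Finset.disjoint_union_right.mpr ⟨hdX, hdT⟩, hdF⟩
    exact ⟨hdY, by omega, by rw [← e1]; exact hsp⟩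

lemma b_XT (hrk : IsRankFn rk) (hA2 : AxiomA2 rk m) (Hmol : IsMolecule rk X T F) :
    (cobasesOver rk (X ∪ T)).gcd (fun J => m (X ∪ T ∪ J)) * m X
      = m (X ∪ T) * (cobasesOver rk X).gcd (fun J => m (X ∪ J)) := by
  rw [cobases_XT_eq hrk Hmol, gcd_mul_right_nat, gcd_mul_left_nat]
  refine Finset.gcd_congr rfl fun J hJ => ?_
  have h := mol_cobase_X hrk hA2 Hmol hJ
  rw [mul_comm]
  exact h

lemma b_Y (hrk : IsRankFn rk) (hA2 : AxiomA2 rk m) (Hmol : IsMolecule rk X T F) :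
    (cobasesOver rk (X ∪ T ∪ F)).gcd (fun K => m (X ∪ T ∪ F ∪ K)) * m (X ∪ F)
      = m (X ∪ T ∪ F) * (cobasesOver rk (X ∪ F)).gcd (fun K => m (X ∪ F ∪ K)) := by
  rw [cobases_Y_eq hrk Hmol, gcd_mul_right_nat, gcd_mul_left_nat]
  refine Finset.gcd_congr rfl fun K hK => ?_
  have h := mol_cobase_XF hrk hA2 Hmol hK
  have hswap : (X ∪ F) ∪ T = X ∪ T ∪ F := by
    ext x
    simp only [Finset.mem_union]
    tauto
  rw [hswap] at h
  rw [mul_comm]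
  exact h

lemma b_identity (hrk : IsRankFn rk) (hm0 : ∀ Z : Finset E, 0 < m Z)
    (hA2 : AxiomA2 rk m) (Hmol : IsMolecule rk X T F) :
    (cobasesOver rk X).gcd (fun J => m (X ∪ J))
        * (cobasesOver rk (X ∪ T ∪ F)).gcd (fun K => m (X ∪ T ∪ F ∪ K))
      = (cobasesOver rk (X ∪ T)).gcd (fun J => m (X ∪ T ∪ J))
        * (cobasesOver rk (X ∪ F)).gcd (fun K => m (X ∪ F ∪ K)) := by
  have h1 := b_XT hrk hA2 Hmol
  have h2 := b_Y hrk hA2 Hmol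
  have h3 := hA2 X T F Hmol
  set bX := (cobasesOver rk X).gcd (fun J => m (X ∪ J)) with hbX
  set bY := (cobasesOver rk (X ∪ T ∪ F)).gcd (fun K => m (X ∪ T ∪ F ∪ K)) with hbY
  set bXT := (cobasesOver rk (X ∪ T)).gcd (fun J => m (X ∪ T ∪ J)) with hbXT
  set bXF := (cobasesOver rk (X ∪ F)).gcd (fun K => m (X ∪ F ∪ K)) with hbXF
  have key : (bX * bY) * (m X * m (X ∪ F)) = (bXT * bXF) * (m X * m (X ∪ F)) := by
    calc (bX * bY) * (m X * m (X ∪ F)) = (bX * m X) * (bY * m (X ∪ F)) := by ring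
    _ = (bX * m X) * (m (X ∪ T ∪ F) * bXF) := by rw [h2]
    _ = (bX * bXF) * (m X * m (X ∪ T ∪ F)) := by ring
    _ = (bX * bXF) * (m (X ∪ T) * m (X ∪ F)) := by rw [h3]
    _ = (m (X ∪ T) * bX) * (bXF * m (X ∪ F)) := by ring
    _ = (bXT * m X) * (bXF * m (X ∪ F)) := by rw [h1]
    _ = (bXT * bXF) * (m X * m (X ∪ F)) := by ring
  exact Nat.eq_of_mul_eq_mul_right (Nat.mul_pos (hm0 X) (hm0 (X ∪ F))) key

lemma G_identity (hrk : IsRankFn rk) (hm0 : ∀ Z : Finset E, 0 < m Z)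
    (hA2 : AxiomA2 rk m) (Hmol : IsMolecule rk X T F) :
    (adaptedOf rk X).gcd m * (adaptedOf rk (X ∪ T ∪ F)).gcd m
      = (adaptedOf rk (X ∪ T)).gcd m * (adaptedOf rk (X ∪ F)).gcd m := by
  have gX := G_mul_m (m := m) hrk hA2 X
  have gY := G_mul_m (m := m) hrk hA2 (X ∪ T ∪ F)
  have gXT := G_mul_m (m := m) hrk hA2 (X ∪ T)
  have gXF := G_mul_m (m := m) hrk hA2 (X ∪ F)
  have ha := a_identity hrk hm0 hA2 Hmol
  have hb := b_identity hrk hm0 hA2 Hmol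
  have hm := hA2 X T F Hmol
  have key : ((adaptedOf rk X).gcd m * (adaptedOf rk (X ∪ T ∪ F)).gcd m)
        * (m X * m (X ∪ T ∪ F))
      = ((adaptedOf rk (X ∪ T)).gcd m * (adaptedOf rk (X ∪ F)).gcd m)
        * (m X * m (X ∪ T ∪ F)) := by
    calc ((adaptedOf rk X).gcd m * (adaptedOf rk (X ∪ T ∪ F)).gcd m)
          * (m X * m (X ∪ T ∪ F))
        = ((adaptedOf rk X).gcd m * m X)
          * ((adaptedOf rk (X ∪ T ∪ F)).gcd m * m (X ∪ T ∪ F)) := by ring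
    _ = ((basesOf rk X).gcd m * (cobasesOver rk X).gcd (fun J => m (X ∪ J)))
          * ((basesOf rk (X ∪ T ∪ F)).gcd m
            * (cobasesOver rk (X ∪ T ∪ F)).gcd (fun K => m (X ∪ T ∪ F ∪ K))) := by
        rw [gX, gY]
    _ = ((basesOf rk X).gcd m * (basesOf rk (X ∪ T ∪ F)).gcd m)
          * ((cobasesOver rk X).gcd (fun J => m (X ∪ J))
            * (cobasesOver rk (X ∪ T ∪ F)).gcd (fun K => m (X ∪ T ∪ F ∪ K))) := by ring
    _ = ((basesOf rk (X ∪ T)).gcd m * (basesOf rk (X ∪ F)).gcd m)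
          * ((cobasesOver rk (X ∪ T)).gcd (fun J => m (X ∪ T ∪ J))
            * (cobasesOver rk (X ∪ F)).gcd (fun K => m (X ∪ F ∪ K))) := by
        rw [ha, hb]
    _ = ((basesOf rk (X ∪ T)).gcd m
            * (cobasesOver rk (X ∪ T)).gcd (fun J => m (X ∪ T ∪ J)))
          * ((basesOf rk (X ∪ F)).gcd m
            * (cobasesOver rk (X ∪ F)).gcd (fun K => m (X ∪ F ∪ K))) := by ring
    _ = ((adaptedOf rk (X ∪ T)).gcd m * m (X ∪ T))
          * ((adaptedOf rk (X ∪ F)).gcd m * m (X ∪ F)) := by rw [gXT, gXF]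
    _ = ((adaptedOf rk (X ∪ T)).gcd m * (adaptedOf rk (X ∪ F)).gcd m)
          * (m (X ∪ T) * m (X ∪ F)) := by ring
    _ = ((adaptedOf rk (X ∪ T)).gcd m * (adaptedOf rk (X ∪ F)).gcd m)
          * (m X * m (X ∪ T ∪ F)) := by rw [← hm]
  exact Nat.eq_of_mul_eq_mul_right (Nat.mul_pos (hm0 X) (hm0 (X ∪ T ∪ F))) key

end MainPart

end ReducedA2Aux


/-- The multiplicity function of the reduction of a
quasi-arithmetic matroid satisfies axiom (A2). -/
theorem reducedM_axiomA2 {E : Type*} [Fintype E] [DecidableEq E]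
    (rk m : Finset E → ℕ) (hM : IsQuasiArithmeticMatroid rk m) :
    AxiomA2 rk (reducedM rk m) := by
  obtain ⟨hrk, hm0, _hA1, hA2⟩ := hM
  intro X T F Hmol
  have hg : ∀ Z : Finset E, (basesFinset rk).gcd m ∣ (ReducedA2Aux.adaptedOf rk Z).gcd m := by
    intro Z
    exact Finset.dvd_gcd fun B hB => Finset.gcd_dvd (Finset.mem_of_mem_filter B hB)
  have hGid := ReducedA2Aux.G_identity hrk hm0 hA2 Hmol
  have hred : ∀ Z : Finset E, reducedM rk m Z
      = (ReducedA2Aux.adaptedOf rk Z).gcd m / (basesFinset rk).gcd m := fun Z => rfl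
  rw [hred, hred, hred, hred,
    Nat.div_mul_div_comm (hg X) (hg (X ∪ T ∪ F)),
    Nat.div_mul_div_comm (hg (X ∪ T)) (hg (X ∪ F)), hGid]
end

section
/- Let q ≥ 1 and let G be an abelian group of permutations of ℤ/qℤ such that every element of G is an involution of the form x ↦ εx + β with ε ∈ {1, −1} and β ∈ ℤ/qℤ. Then every orbit of the action of G on ℤ/qℤ has cardinality 1, 2, or 4. -/
/-- In `ZMod q` there is at most one nonzero solution of `x + x = 0`. -/
lemma two_torsion_unique (q : ℕ) [NeZero q] (x y : ZMod q)
    (hx : x + x = 0) (hy : y + y = 0) (hx0 : x ≠ 0) (hy0 : y ≠ 0) : x = y := by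
  have key : ∀ z : ZMod q, z + z = 0 → z ≠ 0 → z.val + z.val = q := by
    intro z hz hz0
    have h1 : ((z.val + z.val : ℕ) : ZMod q) = 0 := by
      push_cast [ZMod.natCast_val, ZMod.cast_id]
      exact hz
    have h2 : q ∣ z.val + z.val := (ZMod.natCast_eq_zero_iff _ _).mp h1
    have h3 : z.val < q := ZMod.val_lt z
    have h4 : z.val ≠ 0 := fun h => hz0 ((ZMod.val_eq_zero z).mp h)
    rcases h2 with ⟨c, hc⟩
    have hc0 : c ≠ 0 := by rintro rfl; omega
    have hc2 : c < 2 := by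
      by_contra hcc
      push_neg at hcc
      have : q * 2 ≤ q * c := Nat.mul_le_mul_left q hcc
      omega
    have hc1 : c = 1 := by omega
    subst hc1
    omega
  have hxv := key x hx hx0
  have hyv := key y hy hy0
  exact ZMod.val_injective q (by omega)

/-- Let `q ≥ 1` and let `G` be an abelian group of permutations
of `ℤ/qℤ` such that every element of `G` is an involution of the form
`x ↦ ε x + β` with `ε ∈ {1, -1}`.  Then every orbit of the action of `G` on
`ℤ/qℤ` has cardinality `1`, `2`, or `4`. -/
theorem orbit_card_of_abelian_affine_involutions (q : ℕ) (hq : 1 ≤ q)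
    (G : Subgroup (Equiv.Perm (ZMod q)))
    (hcomm : ∀ g ∈ G, ∀ h ∈ G, g * h = h * g)
    (hinv : ∀ g ∈ G, g * g = 1)
    (haff : ∀ g ∈ G, ∃ ε β : ZMod q, (ε = 1 ∨ ε = -1) ∧ ∀ x : ZMod q, g x = ε * x + β)
    (a : ZMod q) :
    Nat.card {x : ZMod q | ∃ g ∈ G, g a = x} = 1 ∨
    Nat.card {x : ZMod q | ∃ g ∈ G, g a = x} = 2 ∨
    Nat.card {x : ZMod q | ∃ g ∈ G, g a = x} = 4 := by
  classical
  haveI : NeZero q := ⟨by omega⟩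
  -- the orbit set coincides with the `MulAction` orbit
  have hSorb : {x : ZMod q | ∃ g ∈ G, g a = x} = MulAction.orbit ↥G a := by
    ext x
    constructor
    · rintro ⟨g, hg, rfl⟩
      exact ⟨⟨g, hg⟩, rfl⟩
    · rintro ⟨g, rfl⟩
      exact ⟨(g : Equiv.Perm (ZMod q)), g.2, rfl⟩
  rw [hSorb]
  set d := Nat.card (MulAction.orbit ↥G a) with hd
  -- orbit-stabilizer
  have hdvdG : d ∣ Nat.card ↥G := by
    rw [hd, Nat.card_congr (MulAction.orbitEquivQuotientStabilizer ↥G a)]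
    exact Subgroup.card_quotient_dvd_card _
  -- every translation in G has 2-torsion shift
  have tor : ∀ g ∈ G, ∀ β : ZMod q, (∀ x, g x = x + β) → β + β = 0 := by
    intro g hg β hgβ
    have h1 : (g * g) 0 = (1 : Equiv.Perm (ZMod q)) 0 := by rw [hinv g hg]
    have : g (g 0) = 0 := h1
    rw [hgβ, hgβ] at this
    simpa using this
  -- bound the size of G
  have hle : Nat.card ↥G ≤ 4 := by
    -- uniqueness among nontrivial translations
    have tuniq : ∀ g₁ ∈ G, ∀ g₂ ∈ G, ∀ β₁ β₂ : ZMod q, β₁ ≠ 0 → β₂ ≠ 0 →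
        (∀ x, g₁ x = x + β₁) → (∀ x, g₂ x = x + β₂) → g₁ = g₂ := by
      intro g₁ hg₁ g₂ hg₂ β₁ β₂ hβ₁ hβ₂ h₁ h₂
      have e : β₁ = β₂ :=
        two_torsion_unique q β₁ β₂ (tor g₁ hg₁ β₁ h₁) (tor g₂ hg₂ β₂ h₂) hβ₁ hβ₂
      exact Equiv.ext fun x => by rw [h₁, h₂, e]
    have hsub : ∃ s : Set (Equiv.Perm (ZMod q)), (G : Set _) ⊆ s ∧ s.ncard ≤ 4 := by
      by_cases hr : ∃ g ∈ G, ∃ γ : ZMod q, ∀ x, g x = -x + γ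
      · obtain ⟨r, hrG, γ, hrγ⟩ := hr
        by_cases ht : ∃ g ∈ G, ∃ β : ZMod q, β ≠ 0 ∧ ∀ x, g x = x + β
        · obtain ⟨t, htG, h, hh0, hth⟩ := ht
          refine ⟨{1, t, r, t * r}, ?_, ?_⟩
          · intro g hg
            obtain ⟨ε, β, hε, hgβ⟩ := haff g hg
            rcases hε with rfl | rfl
            · -- translation
              simp only [one_mul] at hgβ
              by_cases hβ : β = 0
              · left; exact Equiv.ext fun x => by simp [hgβ, hβ]
              · right; left; exact tuniq g hg t htG β h hβ hh0 hgβ hth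
            · -- reflection
              simp only [neg_one_mul] at hgβ
              have hgr : ∀ x, (g * r) x = x + (β - γ) := by
                intro x
                show g (r x) = _
                rw [hrγ, hgβ]; ring
              by_cases hβγ : β - γ = 0
              · right; right; left
                have e : β = γ := by linear_combination (norm := ring_nf) hβγ
                exact Equiv.ext fun x => by rw [hgβ, hrγ, e]
              · right; right; right
                have e : g * r = t :=
                  tuniq (g * r) (mul_mem hg hrG) t htG (β - γ) h hβγ hh0 hgr hth
                have : g * (r * r) = t * r := by rw [← mul_assoc, e]
                rwa [hinv r hrG, mul_one] at this
          · calc ({1, t, r, t * r} : Set _).ncard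
                ≤ ({t, r, t * r} : Set _).ncard + 1 := Set.ncard_insert_le _ _
              _ ≤ (({r, t * r} : Set _).ncard + 1) + 1 :=
                  Nat.add_le_add_right (Set.ncard_insert_le _ _) 1
              _ ≤ ((({t * r} : Set _).ncard + 1) + 1) + 1 :=
                  Nat.add_le_add_right (Nat.add_le_add_right (Set.ncard_insert_le _ _) 1) 1
              _ ≤ 4 := by rw [Set.ncard_singleton]
        · -- no nontrivial translation
          refine ⟨{1, r}, ?_, ?_⟩
          · intro g hg
            obtain ⟨ε, β, hε, hgβ⟩ := haff g hg
            rcases hε with rfl | rfl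
            · simp only [one_mul] at hgβ
              have hβ : β = 0 := by
                by_contra hβ; exact ht ⟨g, hg, β, hβ, hgβ⟩
              left; exact Equiv.ext fun x => by simp [hgβ, hβ]
            · simp only [neg_one_mul] at hgβ
              have hgr : ∀ x, (g * r) x = x + (β - γ) := by
                intro x
                show g (r x) = _
                rw [hrγ, hgβ]; ring
              have hβγ : β - γ = 0 := by
                by_contra hβγ; exact ht ⟨g * r, mul_mem hg hrG, β - γ, hβγ, hgr⟩
              have e : β = γ := by linear_combination (norm := ring_nf) hβγ
              right; exact Equiv.ext fun x => by rw [hgβ, hrγ, e]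
          · calc ({1, r} : Set _).ncard ≤ ({r} : Set _).ncard + 1 := Set.ncard_insert_le _ _
              _ ≤ 4 := by simp
      · -- no reflection at all
        by_cases ht : ∃ g ∈ G, ∃ β : ZMod q, β ≠ 0 ∧ ∀ x, g x = x + β
        · obtain ⟨t, htG, h, hh0, hth⟩ := ht
          refine ⟨{1, t}, ?_, ?_⟩
          · intro g hg
            obtain ⟨ε, β, hε, hgβ⟩ := haff g hg
            rcases hε with rfl | rfl
            · simp only [one_mul] at hgβ
              by_cases hβ : β = 0
              · left; exact Equiv.ext fun x => by simp [hgβ, hβ]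
              · right; exact tuniq g hg t htG β h hβ hh0 hgβ hth
            · simp only [neg_one_mul] at hgβ
              exact absurd ⟨g, hg, β, hgβ⟩ hr
          · calc ({1, t} : Set _).ncard ≤ ({t} : Set _).ncard + 1 := Set.ncard_insert_le _ _
              _ ≤ 4 := by simp
        · refine ⟨{1}, ?_, by simp⟩
          intro g hg
          obtain ⟨ε, β, hε, hgβ⟩ := haff g hg
          rcases hε with rfl | rfl
          · simp only [one_mul] at hgβ
            have hβ : β = 0 := by
              by_contra hβ; exact ht ⟨g, hg, β, hβ, hgβ⟩
            exact Equiv.ext fun x => by simp [hgβ, hβ]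
          · simp only [neg_one_mul] at hgβ
            exact absurd ⟨g, hg, β, hgβ⟩ hr
    obtain ⟨s, hGs, hs4⟩ := hsub
    calc Nat.card ↥G = Nat.card (G : Set (Equiv.Perm (ZMod q))) := rfl
      _ = (G : Set (Equiv.Perm (ZMod q))).ncard := Nat.card_coe_set_eq _
      _ ≤ s.ncard := Set.ncard_le_ncard hGs (Set.toFinite s)
      _ ≤ 4 := hs4
  have hGpos : 0 < Nat.card ↥G := Nat.card_pos
  -- card G ≠ 3
  have hG3 : Nat.card ↥G ≠ 3 := by
    intro h3
    have hnt : Nontrivial ↥G := Finite.one_lt_card_iff_nontrivial.mp (by omega)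
    obtain ⟨g, hg1⟩ := exists_ne (1 : ↥G)
    have hord3 : orderOf g ∣ 3 := h3 ▸ orderOf_dvd_natCard g
    have hg2 : g ^ 2 = 1 := by
      apply Subtype.ext
      rw [pow_two]
      push_cast
      exact hinv (g : Equiv.Perm (ZMod q)) g.2
    have hord2 : orderOf g ∣ 2 := orderOf_dvd_of_pow_eq_one hg2
    have h1 : orderOf g ∣ 1 := by
      have := Nat.dvd_gcd hord3 hord2
      simpa using this
    exact hg1 (orderOf_eq_one_iff.mp (Nat.dvd_one.mp h1))
  have hdvd4 : d ∣ 4 := by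
    have h124 : Nat.card ↥G = 1 ∨ Nat.card ↥G = 2 ∨ Nat.card ↥G = 4 := by omega
    rcases h124 with h | h | h <;> rw [h] at hdvdG
    · exact hdvdG.trans (by norm_num)
    · exact hdvdG.trans (by norm_num)
    · exact hdvdG
  have hdpos : 0 < d := by
    rw [hd]
    have : Nonempty (MulAction.orbit ↥G a) := ⟨⟨a, MulAction.mem_orbit_self a⟩⟩
    exact Nat.card_pos
  have hmem : d ∈ Nat.divisors 4 := Nat.mem_divisors.mpr ⟨hdvd4, by norm_num⟩
  have hdiv : Nat.divisors 4 = {1, 2, 4} := by decide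
  rw [hdiv] at hmem
  simpa using hmem
end
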